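/- arXiv:quant-ph/0508020 — 2 statements merged into one kernel-verified Lean document; each statement's English description precedes it below -/
import Mathlib

section
/- For i ≠ i′ and j ≠ j′, the matrix ρ(i,i′;j,j′) := ½ P[(|u_i w_j⟩ − |u_{i′} w_{j′}⟩)/√2] + ½ P[(|u_i w_{j′}⟩ − |u_{i′} w_j⟩)/√2] equals ½ P[|V_+⟩⊗|X_−⟩] + ½ P[|V_−⟩⊗|X_+⟩], where |V_±⟩ = (|u_i⟩ ± |u_{i′}⟩)/√2 and |X_±⟩ = (|w_j⟩ ± |w_{j′}⟩)/√2; in particular ρ(i,i′;j,j′) is separable on C^p ⊗ C^q. -/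
open Matrix Kronecker
open scoped BigOperators Classical ComplexOrder

noncomputable section

def grho {V : Type*} [Fintype V] [DecidableEq V] (G : SimpleGraph V) : Matrix V V ℂ :=
  ((2 * G.edgeFinset.card : ℂ))⁻¹ • G.lapMatrix ℂ

def degM {V : Type*} [Fintype V] [DecidableEq V] (G : SimpleGraph V) : Matrix V V ℂ :=
  Matrix.diagonal fun v => (G.degree v : ℂ)

def ptB {p q : ℕ} {α : Type*} (A : Matrix (Fin p × Fin q) (Fin p × Fin q) α) :
    Matrix (Fin p × Fin q) (Fin p × Fin q) α :=
  fun x y => A (x.1, y.2) (y.1, x.2)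

def gptB {p q : ℕ} (G : SimpleGraph (Fin p × Fin q)) : SimpleGraph (Fin p × Fin q) where
  Adj x y := G.Adj (x.1, y.2) (y.1, x.2)
  symm := ⟨fun x y h => G.adj_symm h⟩
  loopless := ⟨fun x h => G.irrefl h⟩

def IsDensityMatrix {n : Type*} [Fintype n] [DecidableEq n] (A : Matrix n n ℂ) : Prop :=
  A.PosSemidef ∧ A.trace = 1

def Separable {p q : ℕ} (ρ : Matrix (Fin p × Fin q) (Fin p × Fin q) ℂ) : Prop :=
  ∃ (m : ℕ) (w : Fin m → ℝ) (σ : Fin m → Matrix (Fin p) (Fin p) ℂ)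
    (τ : Fin m → Matrix (Fin q) (Fin q) ℂ),
    (∀ k, 0 ≤ w k) ∧ (∑ k, w k = 1) ∧
    (∀ k, IsDensityMatrix (σ k)) ∧ (∀ k, IsDensityMatrix (τ k)) ∧
    ρ = ∑ k, (w k : ℂ) • (σ k ⊗ₖ τ k)

def proj {n : Type*} (ψ : n → ℂ) : Matrix n n ℂ := vecMulVec ψ (star ψ)

/-!
Put `x = u_i w_j - u_{i'} w_{j'}` and `y = u_i w_{j'} - u_{i'} w_j`. Expanding the products gives
`(u_i + u_{i'}) ⊗ (w_j - w_{j'}) = x - y` and `(u_i - u_{i'}) ⊗ (w_j + w_{j'}) = x + y`, so the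
identity is the parallelogram law `P[x + y] + P[x - y] = 2 (P[x] + P[y])` for the unnormalised
projections `P[ψ] = |ψ⟩⟨ψ|`. The right-hand side is an equal mixture of two product pure states,
hence separable.
-/

variable {m n : Type*}

lemma proj_smul (c : ℂ) (ψ : n → ℂ) : proj (c • ψ) = (c * star c) • proj ψ := by
  ext a b
  simp only [proj, vecMulVec_apply, Pi.smul_apply, Pi.star_apply, star_smul, smul_eq_mul,
    Matrix.smul_apply]
  ring

lemma proj_add_add_proj_sub (x y : n → ℂ) :
    proj (x + y) + proj (x - y) = (2 : ℂ) • (proj x + proj y) := by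
  ext a b
  simp only [proj, vecMulVec_apply, Pi.add_apply, Pi.sub_apply, Pi.star_apply, star_add,
    star_sub, Matrix.add_apply, Matrix.smul_apply, smul_eq_mul]
  ring

lemma proj_tensor (f : m → ℂ) (g : n → ℂ) :
    proj (fun z : m × n => f z.1 * g z.2) = proj f ⊗ₖ proj g := by
  ext a b
  simp only [proj, vecMulVec_apply, kroneckerMap_apply, Pi.star_apply, star_mul']
  ring

lemma Pi.single_prodMk_one [DecidableEq m] [DecidableEq n] (i : m) (j : n) :
    (Pi.single (i, j) 1 : m × n → ℂ) =
      fun z => (Pi.single i 1 : m → ℂ) z.1 * (Pi.single j 1 : n → ℂ) z.2 := by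
  ext ⟨a, b⟩
  by_cases ha : a = i <;> by_cases hb : b = j <;> simp [ha, hb]

lemma ofReal_sqrt_two_inv_mul_star : (Real.sqrt 2 : ℂ)⁻¹ * star (Real.sqrt 2 : ℂ)⁻¹ = 1 / 2 := by
  rw [star_inv₀, Complex.star_def, Complex.conj_ofReal, ← mul_inv, ← Complex.ofReal_mul,
    Real.mul_self_sqrt zero_le_two]
  norm_num

lemma half_proj_add_half_proj_eq {c : ℂ} (hc : c * star c = 1 / 2) (f f' : m → ℂ)
    (g g' : n → ℂ) :
    (1 / 2 : ℂ) • proj (c • ((fun z : m × n => f z.1 * g z.2) - fun z => f' z.1 * g' z.2)) +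
      (1 / 2 : ℂ) • proj (c • ((fun z : m × n => f z.1 * g' z.2) - fun z => f' z.1 * g z.2)) =
    (1 / 2 : ℂ) • proj (fun z : m × n => (c • (f + f')) z.1 * (c • (g - g')) z.2) +
      (1 / 2 : ℂ) • proj (fun z : m × n => (c • (f - f')) z.1 * (c • (g + g')) z.2) := by
  set x : m × n → ℂ := (fun z => f z.1 * g z.2) - fun z => f' z.1 * g' z.2
  set y : m × n → ℂ := (fun z => f z.1 * g' z.2) - fun z => f' z.1 * g z.2
  have hsub : (fun z : m × n => (c • (f + f')) z.1 * (c • (g - g')) z.2) = (c * c) • (x - y) := by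
    funext z; simp only [x, y, Pi.smul_apply, Pi.add_apply, Pi.sub_apply, smul_eq_mul]; ring
  have hadd : (fun z : m × n => (c • (f - f')) z.1 * (c • (g + g')) z.2) = (c * c) • (x + y) := by
    funext z; simp only [x, y, Pi.smul_apply, Pi.add_apply, Pi.sub_apply, smul_eq_mul]; ring
  have hc2 : c * c * star (c * c) = 1 / 4 := by
    rw [star_mul', mul_mul_mul_comm, hc]; norm_num
  rw [hsub, hadd, proj_smul, proj_smul, proj_smul, proj_smul, hc, hc2]
  linear_combination (norm := module) (-(1 / 8 : ℂ)) • proj_add_add_proj_sub x y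

lemma isDensityMatrix_proj [Fintype n] [DecidableEq n] {ψ : n → ℂ} (hψ : ψ ⬝ᵥ star ψ = 1) :
    IsDensityMatrix (proj ψ) :=
  ⟨posSemidef_vecMulVec_self_star ψ, (trace_vecMulVec ψ (star ψ)).trans hψ⟩

lemma isDensityMatrix_proj_smul [Fintype n] [DecidableEq n] {c : ℂ} (hc : c * star c = 1 / 2)
    {v : n → ℂ} (hv : v ⬝ᵥ star v = 2) : IsDensityMatrix (proj (c • v)) := by
  refine isDensityMatrix_proj ?_
  rw [star_smul, smul_dotProduct, dotProduct_smul, hv, smul_eq_mul, smul_eq_mul]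
  linear_combination 2 * hc

lemma single_add_single_dotProduct_star [Fintype n] [DecidableEq n] {i i' : n} (hi : i ≠ i') :
    (Pi.single i 1 + Pi.single i' 1 : n → ℂ) ⬝ᵥ star (Pi.single i 1 + Pi.single i' 1) = 2 := by
  simp [dotProduct_add, hi, hi.symm]
  norm_num

lemma single_sub_single_dotProduct_star [Fintype n] [DecidableEq n] {i i' : n} (hi : i ≠ i') :
    (Pi.single i 1 - Pi.single i' 1 : n → ℂ) ⬝ᵥ star (Pi.single i 1 - Pi.single i' 1) = 2 := by
  simp [dotProduct_sub, hi, hi.symm]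
  norm_num

lemma separable_add_of_isDensityMatrix {p q : ℕ} {w₁ w₂ : ℝ} (hw₁ : 0 ≤ w₁) (hw₂ : 0 ≤ w₂)
    (hw : w₁ + w₂ = 1) {σ₁ σ₂ : Matrix (Fin p) (Fin p) ℂ} {τ₁ τ₂ : Matrix (Fin q) (Fin q) ℂ}
    (hσ₁ : IsDensityMatrix σ₁) (hσ₂ : IsDensityMatrix σ₂)
    (hτ₁ : IsDensityMatrix τ₁) (hτ₂ : IsDensityMatrix τ₂) :
    Separable ((w₁ : ℂ) • (σ₁ ⊗ₖ τ₁) + (w₂ : ℂ) • (σ₂ ⊗ₖ τ₂)) := by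
  refine ⟨2, ![w₁, w₂], ![σ₁, σ₂], ![τ₁, τ₂], ?_, ?_, ?_, ?_, ?_⟩
  · intro k; fin_cases k <;> assumption
  · simpa [Fin.sum_univ_two] using hw
  · intro k; fin_cases k <;> assumption
  · intro k; fin_cases k <;> assumption
  · simp [Fin.sum_univ_two]

theorem stmt10 (p q : ℕ) (i i' : Fin p) (j j' : Fin q)
    (hi : i ≠ i') (hj : j ≠ j') :
    ((1/2 : ℂ) • proj ((Real.sqrt 2 : ℂ)⁻¹ •
        (Pi.single (i, j) 1 - Pi.single (i', j') 1 : Fin p × Fin q → ℂ)) +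
     (1/2 : ℂ) • proj ((Real.sqrt 2 : ℂ)⁻¹ •
        (Pi.single (i, j') 1 - Pi.single (i', j) 1 : Fin p × Fin q → ℂ)) =
     (1/2 : ℂ) • proj (fun x => ((Real.sqrt 2 : ℂ)⁻¹ •
          (Pi.single i 1 + Pi.single i' 1 : Fin p → ℂ)) x.1 *
        ((Real.sqrt 2 : ℂ)⁻¹ • (Pi.single j 1 - Pi.single j' 1 : Fin q → ℂ)) x.2) +
     (1/2 : ℂ) • proj (fun x => ((Real.sqrt 2 : ℂ)⁻¹ •
          (Pi.single i 1 - Pi.single i' 1 : Fin p → ℂ)) x.1 *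
        ((Real.sqrt 2 : ℂ)⁻¹ • (Pi.single j 1 + Pi.single j' 1 : Fin q → ℂ)) x.2)) ∧
    Separable
      ((1/2 : ℂ) • proj ((Real.sqrt 2 : ℂ)⁻¹ •
          (Pi.single (i, j) 1 - Pi.single (i', j') 1 : Fin p × Fin q → ℂ)) +
       (1/2 : ℂ) • proj ((Real.sqrt 2 : ℂ)⁻¹ •
          (Pi.single (i, j') 1 - Pi.single (i', j) 1 : Fin p × Fin q → ℂ))) := by
  have hc := ofReal_sqrt_two_inv_mul_star
  have hρ := half_proj_add_half_proj_eq hc (Pi.single i 1) (Pi.single i' 1)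
    (Pi.single j 1) (Pi.single j' 1)
  simp only [Pi.single_prodMk_one]
  refine ⟨hρ, ?_⟩
  rw [hρ, proj_tensor, proj_tensor]
  have hsep := separable_add_of_isDensityMatrix (w₁ := 1 / 2) (w₂ := 1 / 2) (by norm_num) (by norm_num)
    (by norm_num) (isDensityMatrix_proj_smul hc (single_add_single_dotProduct_star hi))
    (isDensityMatrix_proj_smul hc (single_sub_single_dotProduct_star hi))
    (isDensityMatrix_proj_smul hc (single_sub_single_dotProduct_star hj))
    (isDensityMatrix_proj_smul hc (single_add_single_dotProduct_star hj))
  simpa using hsep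
end
end

section
/- If G is a perfect entangling matching on vertices {(i,1),(i,2) : 1 ≤ i ≤ p} in which every edge joins a vertex with second label 1 to a vertex with second label 2 and different first labels, then G^{Γ_B} is also a perfect entangling matching; i.e., P_{p·2} = P^S_{p·2}. -/
open Matrix Kronecker
open scoped BigOperators Classical ComplexOrder

noncomputable section

/-!
With two values of the second label, an edge `{(i, s), (j, t)}` with `s ≠ t` has `t = 1 - s`, so
partial transposition just swaps `s` and `t`: `G^{Γ_B}` is the pullback of `G` along the involution
`(i, s) ↦ (i, 1 - s)`. Hence it is isomorphic to `G` and stays a perfect matching; the entangling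
condition survives partial transposition for any number of labels.
-/

theorem gptB_adj_ne_of_adj_ne {p q : ℕ} {G : SimpleGraph (Fin p × Fin q)}
    (hent : ∀ x y : Fin p × Fin q, G.Adj x y → x.1 ≠ y.1 ∧ x.2 ≠ y.2) :
    ∀ x y : Fin p × Fin q, (gptB G).Adj x y → x.1 ≠ y.1 ∧ x.2 ≠ y.2 :=
  fun x y hxy => (hent _ _ hxy).imp id Ne.symm

def flipSnd (p : ℕ) : Fin p × Fin 2 ≃ Fin p × Fin 2 :=
  Equiv.prodCongr (Equiv.refl _) Fin.revPerm

theorem gptB_eq_comap_flipSnd {p : ℕ} {G : SimpleGraph (Fin p × Fin 2)}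
    (hsnd : ∀ x y : Fin p × Fin 2, G.Adj x y → x.2 ≠ y.2) :
    gptB G = G.comap (flipSnd p) := by
  ext ⟨i, s⟩ ⟨j, t⟩
  have hsame : ∀ u, ¬ G.Adj (i, u) (j, u) := fun u h => hsnd _ _ h rfl
  fin_cases s <;> fin_cases t <;> simp [gptB, flipSnd, hsame]

theorem degree_gptB {p : ℕ} {G : SimpleGraph (Fin p × Fin 2)}
    (hsnd : ∀ x y : Fin p × Fin 2, G.Adj x y → x.2 ≠ y.2) (v : Fin p × Fin 2) :
    (gptB G).degree v = G.degree (flipSnd p v) := by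
  convert ((SimpleGraph.Iso.comap (flipSnd p) G).degree_eq v).symm using 2
  · exact gptB_eq_comap_flipSnd hsnd
  · rfl

theorem stmt13 (p : ℕ) (G : SimpleGraph (Fin p × Fin 2))
    (hpm : ∀ v, G.degree v = 1)
    (hent : ∀ x y : Fin p × Fin 2, G.Adj x y → x.1 ≠ y.1 ∧ x.2 ≠ y.2) :
    (∀ v, (gptB G).degree v = 1) ∧
      (∀ x y : Fin p × Fin 2, (gptB G).Adj x y → x.1 ≠ y.1 ∧ x.2 ≠ y.2) :=
  ⟨fun v => (degree_gptB (fun x y h => (hent x y h).2) v).trans (hpm _),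
    gptB_adj_ne_of_adj_ne hent⟩
end
end
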